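/- arXiv:math/0204036 — 6 statements merged into one kernel-verified Lean document; each statement's English description precedes it below -/
import Mathlib

section
/- (Johnson's formula) Let a, b, c be positive integers with gcd(a, b, c) = 1 and set m = gcd(a, b). Assume a/m ≥ 2, b/m ≥ 2, and c ≥ 2. Then g(a, b, c) = m · g(a/m, b/m, c) + (m − 1)c. -/
/-! Write `m = gcd(a, b)`, so that `a = m a'` and `b = m b'` with `gcd(m, c) = 1`. In any
representation `t = x (m a') + y (m b') + z c` only the residue of `z` modulo `m` is forced,
namely `z c ≡ t (mod m)`; multiples of `m` in `z` can be moved into the `a', b', c` part.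
Hence `t` is representable iff `z₀ c ≤ t` and `(t - z₀ c) / m` is representable by
`a', b', c`, where `z₀ < m` is that residue. The worst case is `z₀ = m - 1` with
`(t - z₀ c) / m = g(a', b', c)`. -/

def Representable (a b c t : ℕ) : Prop :=
  ∃ x y z : ℕ, t = x * a + y * b + z * c

theorem Representable.mul_add {m a b c q : ℕ} (hq : Representable a b c q) (z : ℕ) :
    Representable (m * a) (m * b) c (m * q + z * c) := by
  obtain ⟨x, y, w, rfl⟩ := hq
  exact ⟨x, y, m * w + z, by ring⟩

theorem not_representable_mul_add_pred_mul {m a b c q : ℕ} (hm : 0 < m) (hmc : m.Coprime c)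
    (hq : ¬ Representable a b c q) :
    ¬ Representable (m * a) (m * b) c (m * q + (m - 1) * c) := by
  rintro ⟨x, y, z, h⟩
  have hsum : m * (q + c) = m * (x * a + y * b) + (z + 1) * c := by
    obtain ⟨n, rfl⟩ := Nat.exists_eq_add_of_lt hm
    simp only [zero_add, Nat.add_sub_cancel] at h
    linear_combination h
  have hdvd : m ∣ z + 1 := hmc.dvd_of_dvd_mul_right <|
    (Nat.dvd_add_right (dvd_mul_right m _)).mp (hsum ▸ dvd_mul_right m _)
  obtain ⟨k, hk⟩ : ∃ k, z + 1 = m * (k + 1) := by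
    obtain ⟨j, hj⟩ := hdvd
    obtain ⟨k, rfl⟩ := Nat.exists_eq_succ_of_ne_zero (n := j) (by rintro rfl; simp at hj)
    exact ⟨k, hj⟩
  have hcancel : q + c = x * a + y * b + (k + 1) * c := by
    apply Nat.eq_of_mul_eq_mul_left hm
    rw [hsum, hk]
    ring
  exact hq ⟨x, y, k, by linarith⟩

theorem representable_mul_of_lt {m a b c g t : ℕ} (hm : 0 < m) (hmc : m.Coprime c)
    (hg : ∀ q, g < q → Representable a b c q) (ht : m * g + (m - 1) * c < t) :
    Representable (m * a) (m * b) c t := by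
  obtain ⟨z, hzm, hz⟩ := Nat.exists_mul_mod_eq_of_coprime t hmc.symm hm.ne'
  have hzc : z * c ≤ (m - 1) * c := Nat.mul_le_mul_right c (by omega)
  have hzt : z * c ≤ t := by omega
  obtain ⟨q, hq⟩ : m ∣ t - z * c := (Nat.modEq_iff_dvd' hzt).mp (by rwa [mul_comm])
  have hgq : g < q := Nat.lt_of_mul_lt_mul_left (a := m) (by omega)
  have h := (hg q hgq).mul_add (m := m) z
  rwa [← hq, Nat.sub_add_cancel hzt] at h

theorem isGreatest_not_representable_mul {m a b c g : ℕ} (hm : 0 < m) (hmc : m.Coprime c)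
    (hg : IsGreatest {t | ¬ Representable a b c t} g) :
    IsGreatest {t | ¬ Representable (m * a) (m * b) c t} (m * g + (m - 1) * c) := by
  refine ⟨not_representable_mul_add_pred_mul hm hmc hg.1, fun t ht => ?_⟩
  by_contra hlt
  exact ht <| representable_mul_of_lt hm hmc
    (fun q hq => by_contra fun hq' => (hg.2 hq').not_gt hq) (not_le.mp hlt)

theorem johnson_formula_general (a b c : ℕ) (ha : 0 < a)
    (hgcd : Nat.gcd (Nat.gcd a b) c = 1)
    (g' : ℕ)
    (hg' : IsGreatest {t : ℕ | ¬ ∃ x y z : ℕ,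
        t = x * (a / Nat.gcd a b) + y * (b / Nat.gcd a b) + z * c} g') :
    IsGreatest {t : ℕ | ¬ ∃ x y z : ℕ, t = x * a + y * b + z * c}
      (Nat.gcd a b * g' + (Nat.gcd a b - 1) * c) := by
  have h := isGreatest_not_representable_mul (Nat.gcd_pos_of_pos_left b ha) hgcd hg'
  rwa [Nat.mul_div_cancel' (Nat.gcd_dvd_left a b),
    Nat.mul_div_cancel' (Nat.gcd_dvd_right a b)] at h

/-- **Johnson's formula.** Let `a, b, c` be positive integers with
`gcd(a,b,c) = 1` and `m = gcd(a,b)`. If `a/m ≥ 2`, `b/m ≥ 2` and `c ≥ 2`, then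
`g(a,b,c) = m * g(a/m, b/m, c) + (m-1) * c`, where `g` denotes the Frobenius
number (the greatest integer not representable as a nonnegative integer
combination). -/
theorem johnson_formula (a b c : ℕ) (ha : 0 < a) (hb : 0 < b) (hc : 2 ≤ c)
    (hgcd : Nat.gcd (Nat.gcd a b) c = 1)
    (ham : 2 ≤ a / Nat.gcd a b) (hbm : 2 ≤ b / Nat.gcd a b)
    (g' : ℕ)
    (hg' : IsGreatest {t : ℕ | ¬ ∃ x y z : ℕ,
        t = x * (a / Nat.gcd a b) + y * (b / Nat.gcd a b) + z * c} g') :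
    IsGreatest {t : ℕ | ¬ ∃ x y z : ℕ, t = x * a + y * b + z * c}
      (Nat.gcd a b * g' + (Nat.gcd a b - 1) * c) :=
  johnson_formula_general a b c ha hgcd g' hg'
end

section
/- (Brauer–Shockley) Let a, b, c be pairwise coprime integers, each at least 2, such that a divides b + c. Then g(a, b, c) = max( b·⌊ac/(b+c)⌋ , c·⌊ab/(b+c)⌋ ) − a, where ⌊x⌋ denotes the greatest integer not exceeding x. -/
/-- If `a` divides `x` and `-a < x`, then `0 ≤ x`. -/
private lemma bs_dvd_nonneg {a x : ℤ} (ha : 0 < a) (h : a ∣ x) (h2 : -a < x) : 0 ≤ x := by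
  by_contra hx
  push_neg at hx
  have h3 : a ≤ -x := Int.le_of_dvd (by linarith) (dvd_neg.mpr h)
  linarith

/-- **Brauer–Shockley.** Let `a, b, c` be pairwise coprime integers, each at
least `2`, with `a ∣ b + c`. Then
`g(a,b,c) = max(b * ⌊a*c/(b+c)⌋, c * ⌊a*b/(b+c)⌋) - a`. Here the Frobenius
number `g(a,b,c)` is the greatest integer not representable as a nonnegative
integer combination of `a`, `b`, `c`, and `⌊·⌋` is integer (floor) division. -/
theorem brauer_shockley (a b c : ℤ) (ha : 2 ≤ a) (hb : 2 ≤ b) (hc : 2 ≤ c)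
    (hab : IsCoprime a b) (hac : IsCoprime a c) (hbc : IsCoprime b c)
    (hdvd : a ∣ b + c) :
    IsGreatest {t : ℤ | ¬ ∃ x y z : ℕ, t = a * x + b * y + c * z}
      (max (b * (a * c / (b + c))) (c * (a * b / (b + c))) - a) := by
  have ha0 : (0:ℤ) < a := by linarith
  obtain ⟨d, hd⟩ := hdvd
  have hd0 : (0:ℤ) < d := by nlinarith
  set q : ℤ := c / d with hqdef
  set p : ℤ := b / d with hpdef
  have hcd : d * q + c % d = c := Int.mul_ediv_add_emod c d
  have hbd : d * p + b % d = b := Int.mul_ediv_add_emod b d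
  have hr0 : 0 ≤ c % d := Int.emod_nonneg c (ne_of_gt hd0)
  have hrd : c % d < d := Int.emod_lt_of_pos c hd0
  have hs0 : 0 ≤ b % d := Int.emod_nonneg b (ne_of_gt hd0)
  have hsd : b % d < d := Int.emod_lt_of_pos b hd0
  have hq0 : 0 ≤ q := Int.ediv_nonneg (by linarith) (le_of_lt hd0)
  have hp0 : 0 ≤ p := Int.ediv_nonneg (by linarith) (le_of_lt hd0)
  have hqa : q < a := by
    have h1 : d * q < d * a := by linarith
    exact lt_of_mul_lt_mul_left h1 (le_of_lt hd0)
  have hpa : p < a := by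
    have h1 : d * p < d * a := by linarith
    exact lt_of_mul_lt_mul_left h1 (le_of_lt hd0)
  -- rewrite the divisions in the statement
  have e1 : a * c / (b + c) = q := by rw [hd]; exact Int.mul_ediv_mul_of_pos c d ha0
  have e2 : a * b / (b + c) = p := by rw [hd]; exact Int.mul_ediv_mul_of_pos b d ha0
  rw [e1, e2]
  -- key identities
  have hF1 : (a - q) * c - q * b = a * (c % d) := by linear_combination (-q) * hd + (-a) * hcd
  have hF2 : (a - p) * b - p * c = a * (b % d) := by linear_combination (-p) * hd + (-a) * hbd
  have hqb : q * b ≤ (a - q) * c := by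
    have := mul_nonneg (le_of_lt ha0) hr0
    linarith
  have hpc : p * c ≤ (a - p) * b := by
    have := mul_nonneg (le_of_lt ha0) hs0
    linarith
  -- the key lower-bound lemma
  have key : ∀ (y z : ℕ) (k : ℤ), 0 ≤ k → k < a → a ∣ ((y:ℤ) - z - k) →
      min (k * b) ((a - k) * c) ≤ b * y + c * z := by
    intro y z k hk0 hka hdv
    have hy0 : (0:ℤ) ≤ (y:ℤ) := Int.natCast_nonneg y
    have hz0 : (0:ℤ) ≤ (z:ℤ) := Int.natCast_nonneg z
    rcases le_or_gt (z:ℤ) (y:ℤ) with hw | hw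
    · -- y ≥ z: then y - z ≥ k
      have h1 : 0 ≤ (y:ℤ) - z - k := bs_dvd_nonneg ha0 hdv (by linarith)
      have h2 : k * b ≤ ((y:ℤ) - z) * b :=
        mul_le_mul_of_nonneg_right (by linarith) (by linarith)
      have h3 : ((y:ℤ) - z) * b ≤ b * y + c * z := by
        have := mul_nonneg (show (0:ℤ) ≤ b + c by linarith) hz0
        linarith
      exact le_trans (min_le_left _ _) (by linarith)
    · -- y < z
      rcases eq_or_lt_of_le hk0 with hk | hk
      · -- k = 0
        refine le_trans (min_le_left _ _) ?_
        have h0 : (0:ℤ) ≤ b * y + c * z :=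
          add_nonneg (mul_nonneg (by linarith) hy0) (mul_nonneg (by linarith) hz0)
        have : k * b = 0 := by rw [← hk]; ring
        linarith
      · -- k > 0: then z - y ≥ a - k
        have hdv2 : a ∣ ((z:ℤ) - y - (a - k)) := by
          obtain ⟨m, hm⟩ := hdv
          exact ⟨-m - 1, by linarith⟩
        have h1 : 0 ≤ (z:ℤ) - y - (a - k) := bs_dvd_nonneg ha0 hdv2 (by linarith)
        have h2 : (a - k) * c ≤ ((z:ℤ) - y) * c :=
          mul_le_mul_of_nonneg_right (by linarith) (by linarith)
        have h3 : ((z:ℤ) - y) * c ≤ b * y + c * z := by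
          have := mul_nonneg (show (0:ℤ) ≤ b + c by linarith) hy0
          linarith
        exact le_trans (min_le_right _ _) (by linarith)
  constructor
  · -- membership: max(b*q, c*p) - a is not representable
    simp only [Set.mem_setOf_eq]
    rintro ⟨x, y, z, h⟩
    have hx0 : (0:ℤ) ≤ (x:ℤ) := Int.natCast_nonneg x
    have hax : (0:ℤ) ≤ a * x := mul_nonneg (le_of_lt ha0) hx0
    rcases le_total (c * p) (b * q) with hle | hle
    · rw [max_eq_left hle] at h
      have hdv : a ∣ ((y:ℤ) - z - q) := by
        refine hab.dvd_of_dvd_mul_left ⟨-(1 + x + d * z), ?_⟩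
        linear_combination -h - (z:ℤ) * hd
      have hk := key y z q hq0 hqa hdv
      rw [min_eq_left hqb] at hk
      linarith
    · rw [max_eq_right hle] at h
      have hp1 : 0 < p := by
        rcases lt_or_ge 0 p with h' | h'
        · exact h'
        · exfalso
          have hpz : p = 0 := le_antisymm h' hp0
          have hq' : q ≤ 0 := by nlinarith [hle, hpz]
          have hqz : q = 0 := le_antisymm hq' hq0
          rw [hpz] at hbd
          rw [hqz] at hcd
          have h2d : 2 * d ≤ a * d := mul_le_mul_of_nonneg_right ha (le_of_lt hd0)
          linarith
      have hdv : a ∣ ((y:ℤ) - z - (a - p)) := by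
        refine hab.dvd_of_dvd_mul_left ⟨p * d - 1 - x - d * z - b, ?_⟩
        linear_combination -h + ((p:ℤ) - z) * hd
      have hk := key y z (a - p) (by linarith) (by linarith) hdv
      have heq : a - (a - p) = p := by ring
      rw [heq, min_eq_right hpc] at hk
      linarith
  · -- greatest
    intro t ht
    simp only [Set.mem_setOf_eq] at ht
    by_contra hcon
    push_neg at hcon
    -- hcon : max (b*q) (c*p) - a < t
    obtain ⟨u, v, huv⟩ := hab
    set k : ℤ := (t * v) % a with hkdef
    have hk0 : 0 ≤ k := Int.emod_nonneg _ (ne_of_gt ha0)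
    have hka : k < a := Int.emod_lt_of_pos _ ha0
    have hk2 : a * ((t * v) / a) + k = t * v := Int.mul_ediv_add_emod (t * v) a
    have hkb : a ∣ t - k * b :=
      ⟨t * u + ((t * v) / a) * b, by linear_combination (-t) * huv - b * hk2⟩
    -- F4 : min(k*b, (a-k)*c) ≤ max(b*q, c*p)
    have hF4 : min (k * b) ((a - k) * c) ≤ max (b * q) (c * p) := by
      rcases le_or_gt k q with h1 | h1
      · have h2 : k * b ≤ q * b := mul_le_mul_of_nonneg_right h1 (by linarith)
        have h3 := le_max_left (b * q) (c * p)
        have h4 := min_le_left (k * b) ((a - k) * c)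
        linarith
      · have hp1 : a - q - 1 ≤ p := by
          rw [hpdef, Int.le_ediv_iff_mul_le hd0]
          linarith
        have h2 : (a - k) * c ≤ p * c :=
          mul_le_mul_of_nonneg_right (by linarith) (by linarith)
        have h3 := le_max_right (b * q) (c * p)
        have h4 := min_le_right (k * b) ((a - k) * c)
        linarith
    rcases le_total (k * b) ((a - k) * c) with hm | hm
    · -- t_k = k*b
      rw [min_eq_left hm] at hF4
      have h5 : 0 ≤ t - k * b := bs_dvd_nonneg ha0 hkb (by linarith)
      obtain ⟨m, hmeq⟩ := hkb
      have hm0 : 0 ≤ m := by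
        by_contra hm'
        push_neg at hm'
        have := mul_neg_of_pos_of_neg ha0 hm'
        linarith
      exact ht ⟨m.toNat, k.toNat, 0, by
        push_cast [Int.toNat_of_nonneg hm0, Int.toNat_of_nonneg hk0]
        linarith⟩
    · -- t_k = (a-k)*c
      rw [min_eq_right hm] at hF4
      have hkc : a ∣ t - (a - k) * c := by
        have h6 : a ∣ (a - k) * c - k * b := ⟨c - k * d, by linear_combination (-k) * hd⟩
        obtain ⟨m1, hm1⟩ := hkb
        obtain ⟨m2, hm2⟩ := h6
        exact ⟨m1 - m2, by linarith [mul_sub a m1 m2]⟩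
      have h5 : 0 ≤ t - (a - k) * c := bs_dvd_nonneg ha0 hkc (by linarith)
      obtain ⟨m, hmeq⟩ := hkc
      have hm0 : 0 ≤ m := by
        by_contra hm'
        push_neg at hm'
        have := mul_neg_of_pos_of_neg ha0 hm'
        linarith
      exact ht ⟨m.toNat, 0, (a - k).toNat, by
        push_cast [Int.toNat_of_nonneg hm0, Int.toNat_of_nonneg (by linarith : (0:ℤ) ≤ a - k)]
        linarith⟩
end

section
/- (Lewin; almost arithmetic sequences) Let a, m, n, d be positive integers with gcd(a, n) = 1 and 2 ≤ d ≤ a. Then g(a, ma+n, ma+2n, …, ma+(d−1)n) = ( m·⌊(a−2)/(d−1)⌋ + m − 1 )·a + (a−1)·n, where ⌊x⌋ denotes the greatest integer not exceeding x. -/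
private lemma lewin_sum_ind {d : ℕ} (c : ℕ) (hcd : c < d) (v : ℕ) (w : Fin d → ℕ) :
    ∑ j : Fin d, (if j.val = c then v else 0) * w j = v * w ⟨c, hcd⟩ := by
  rw [Finset.sum_eq_single (⟨c, hcd⟩ : Fin d)]
  · simp
  · intro b _ hb
    have : b.val ≠ c := fun h => hb (Fin.ext h)
    simp [this]
  · intro h; exact absurd (Finset.mem_univ _) h

private lemma lewin_construct (a m n d : ℕ) (hd : 2 ≤ d) (s c : ℕ)
    (hc : m * ((s + d - 2) / (d - 1)) ≤ c) :
    ∃ f : Fin d → ℕ,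
      c * a + s * n = ∑ j, f j * (if j.val = 0 then a else m * a + j.val * n) := by
  set e := d - 1 with he_def
  have he : 0 < e := by omega
  set q := s / e with hq_def
  set rem := s % e with hrem_def
  have hdm : e * q + rem = s := Nat.div_add_mod s e
  have hrem_lt : rem < e := Nat.mod_lt _ he
  set k : ℕ := q + (if rem = 0 then 0 else 1) with hk_def
  have hk2 : k ≤ (s + d - 2) / e := by
    rw [Nat.le_div_iff_mul_le he]
    by_cases h0 : rem = 0
    · have hk' : k = q := by rw [hk_def, if_pos h0, add_zero]
      have hq : q * e ≤ s := by rw [hq_def]; exact Nat.div_mul_le_self s e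
      rw [hk']
      omega
    · have hk' : k = q + 1 := by rw [hk_def, if_neg h0]
      have h1 : (q + 1) * e = e * q + e := by ring
      rw [hk', h1]
      omega
  have hmk : m * k ≤ c := le_trans (Nat.mul_le_mul_left m hk2) hc
  obtain ⟨F0, hF0⟩ : ∃ F0, c - m * k = F0 := ⟨_, rfl⟩
  have hceq : F0 + m * k = c := by omega
  refine ⟨fun j => (if j.val = 0 then F0 else 0) + (if j.val = e then q else 0)
    + (if 0 < rem ∧ j.val = rem then 1 else 0), ?_⟩
  have hw0 : (0:ℕ) < d := by omega
  have hwe : e < d := by omega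
  have hwr : rem < d := by omega
  set w : Fin d → ℕ := fun j => if j.val = 0 then a else m * a + j.val * n with hw_def
  have hsplit : ∀ j : Fin d,
      ((if j.val = 0 then F0 else 0) + (if j.val = e then q else 0)
        + (if 0 < rem ∧ j.val = rem then 1 else 0)) * w j
      = (if j.val = 0 then F0 else 0) * w j + (if j.val = e then q else 0) * w j
        + (if 0 < rem ∧ j.val = rem then 1 else 0) * w j := fun j => by ring
  rw [Finset.sum_congr rfl (fun j _ => hsplit j), Finset.sum_add_distrib,
    Finset.sum_add_distrib, lewin_sum_ind 0 hw0, lewin_sum_ind e hwe]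
  have hw0v : w ⟨0, hw0⟩ = a := by simp [hw_def]
  have hwev : w ⟨e, hwe⟩ = m * a + e * n := by
    simp only [hw_def]; rw [if_neg (by omega)]
  by_cases h0 : rem = 0
  · have hz : ∀ j : Fin d, (if 0 < rem ∧ j.val = rem then 1 else 0) * w j = 0 := by
      intro j; rw [if_neg (by omega)]; ring
    rw [Finset.sum_congr rfl (fun j _ => hz j), Finset.sum_const_zero]
    rw [hw0v, hwev]
    have hk' : k = q := by rw [hk_def, if_pos h0, add_zero]
    have hs' : e * q = s := by omega
    rw [← hceq, hk', ← hs']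
    ring
  · have hzz : ∀ j : Fin d, (if 0 < rem ∧ j.val = rem then 1 else 0) * w j
        = (if j.val = rem then 1 else 0) * w j := by
      intro j
      by_cases hj : j.val = rem
      · rw [if_pos ⟨by omega, hj⟩, if_pos hj]
      · rw [if_neg (fun h => hj h.2), if_neg hj]
    rw [Finset.sum_congr rfl (fun j _ => hzz j), lewin_sum_ind rem hwr]
    have hwrv : w ⟨rem, hwr⟩ = m * a + rem * n := by
      simp only [hw_def]; rw [if_neg (by omega)]
    rw [hw0v, hwev, hwrv]
    have hk' : k = q + 1 := by rw [hk_def, if_neg h0]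
    rw [← hceq, hk', ← hdm]
    ring

private lemma lewin_decomp (a m n d : ℕ) (hd : 2 ≤ d) (f : Fin d → ℕ) :
    ∃ f0 K S : ℕ, S ≤ K * (d - 1) ∧
      ∑ j, f j * (if j.val = 0 then a else m * a + j.val * n)
        = f0 * a + K * (m * a) + S * n := by
  have h0d : (0:ℕ) < d := by omega
  refine ⟨f ⟨0, h0d⟩, ∑ j ∈ Finset.univ.erase (⟨0, h0d⟩ : Fin d), f j,
    ∑ j ∈ Finset.univ.erase (⟨0, h0d⟩ : Fin d), f j * j.val, ?_, ?_⟩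
  · calc ∑ j ∈ Finset.univ.erase (⟨0, h0d⟩ : Fin d), f j * j.val
        ≤ ∑ j ∈ Finset.univ.erase (⟨0, h0d⟩ : Fin d), f j * (d - 1) :=
          Finset.sum_le_sum (fun j _ => Nat.mul_le_mul_left _ (by omega))
      _ = (∑ j ∈ Finset.univ.erase (⟨0, h0d⟩ : Fin d), f j) * (d - 1) := by
          rw [Finset.sum_mul]
  · rw [← Finset.add_sum_erase Finset.univ _ (Finset.mem_univ (⟨0, h0d⟩ : Fin d))]
    have h1 : ∀ j ∈ Finset.univ.erase (⟨0, h0d⟩ : Fin d),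
        f j * (if j.val = 0 then a else m * a + j.val * n)
        = f j * (m * a) + (f j * j.val) * n := by
      intro j hj
      have : j.val ≠ 0 := fun h => (Finset.mem_erase.mp hj).1 (Fin.ext h)
      rw [if_neg this]; ring
    rw [Finset.sum_congr rfl h1, Finset.sum_add_distrib, ← Finset.sum_mul, ← Finset.sum_mul]
    norm_num
    ring

/-- **Lewin's formula for almost arithmetic sequences.** Let `a, m, n, d` be
positive integers with `gcd(a, n) = 1` and `2 ≤ d ≤ a`. Then the Frobenius
number of `a, m*a+n, m*a+2n, …, m*a+(d-1)*n` equals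
`(m*⌊(a-2)/(d-1)⌋ + m - 1)*a + (a-1)*n`. -/
theorem lewin_almost_arithmetic (a m n d : ℕ) (hm : 0 < m) (hn : 0 < n)
    (hcop : Nat.Coprime a n) (hd : 2 ≤ d) (hda : d ≤ a) :
    IsGreatest {t : ℕ | ¬ ∃ f : Fin d → ℕ,
        t = ∑ j, f j * (if j.val = 0 then a else m * a + j.val * n)}
      ((m * ((a - 2) / (d - 1)) + m - 1) * a + (a - 1) * n) := by
  haveI : NeZero a := ⟨by omega⟩
  set E := (a - 2) / (d - 1) with hE_def
  set M' := m * E + m - 1 with hM'_def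
  have hmE := Nat.zero_le (m * E)
  have hM'succ : M' + 1 = m * E + m := by omega
  constructor
  · -- F is not representable
    rintro ⟨f, hf⟩
    obtain ⟨f0, K, S, hSb, hdec⟩ := lewin_decomp a m n d hd f
    rw [hdec] at hf
    -- S ≡ a - 1 [MOD a]
    have hMa : M' * a ≡ 0 [MOD a] := Nat.modEq_zero_iff_dvd.mpr ⟨M', mul_comm _ _⟩
    have hf0a : f0 * a ≡ 0 [MOD a] := Nat.modEq_zero_iff_dvd.mpr ⟨f0, mul_comm _ _⟩
    have hKma : K * (m * a) ≡ 0 [MOD a] := Nat.modEq_zero_iff_dvd.mpr ⟨K * m, by ring⟩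
    have e1 : M' * a + (a - 1) * n ≡ 0 + (a - 1) * n [MOD a] := hMa.add_right _
    have e2 : f0 * a + K * (m * a) + S * n ≡ 0 + 0 + S * n [MOD a] :=
      (hf0a.add hKma).add_right _
    rw [← hf] at e2
    have h1 : (a - 1) * n ≡ S * n [MOD a] := by simpa using e1.symm.trans e2
    have h3 : (a - 1) ≡ S [MOD a] := Nat.ModEq.cancel_right_of_coprime hcop h1
    have hSmod : S % a = a - 1 := by
      have h4 := h3.symm
      rw [Nat.ModEq] at h4
      rwa [Nat.mod_eq_of_lt (show a - 1 < a by omega)] at h4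
    have hdam := Nat.div_add_mod S a
    set t := S / a with ht_def
    have hS : a * t + (a - 1) = S := by omega
    have hf'' : M' * a + (a - 1) * n = (f0 + K * m + t * n) * a + (a - 1) * n := by
      rw [hf, ← hS]; ring
    have key : M' * a = (f0 + K * m + t * n) * a := by omega
    have hM' : M' = f0 + K * m + t * n := Nat.eq_of_mul_eq_mul_right (by omega) key
    have h5 : K * m ≤ M' := by
      have := Nat.zero_le f0
      have := Nat.zero_le (t * n)
      omega
    have hK7 : m * K < m * (E + 1) := by
      rw [mul_comm m K, mul_add, mul_one]
      omega
    have hKE : K ≤ E := by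
      have := Nat.lt_of_mul_lt_mul_left hK7
      omega
    have hSb2 : K * (d - 1) ≤ E * (d - 1) := Nat.mul_le_mul_right _ hKE
    have hSb3 : E * (d - 1) ≤ a - 2 := Nat.div_mul_le_self _ _
    omega
  · -- upper bound
    intro t ht
    by_contra hgt
    push_neg at hgt
    apply ht
    set x : ZMod a := (t : ZMod a) * (n : ZMod a)⁻¹ with hx
    have hu : IsUnit ((n : ℕ) : ZMod a) := (ZMod.isUnit_iff_coprime n a).mpr hcop.symm
    set r := x.val with hr
    have hra : r < a := ZMod.val_lt x
    have hxn : ((r : ℕ) : ZMod a) * ((n : ℕ) : ZMod a) = ((t : ℕ) : ZMod a) := by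
      rw [hr, ZMod.natCast_val, ZMod.cast_id, hx, mul_assoc,
        ZMod.inv_mul_of_unit _ hu, mul_one]
    have hle : r * n ≤ t := by
      have h6 : r * n ≤ (a - 1) * n := Nat.mul_le_mul_right _ (by omega)
      have h7 : (a - 1) * n ≤ M' * a + (a - 1) * n := Nat.le_add_left _ _
      omega
    have hdvd : a ∣ t - r * n := by
      have hz : ((t - r * n : ℕ) : ZMod a) = 0 := by
        rw [Nat.cast_sub hle, Nat.cast_mul, hxn, sub_self]
      exact (ZMod.natCast_eq_zero_iff _ _).mp hz
    obtain ⟨c, hc⟩ := hdvd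
    have ht_eq : t = c * a + r * n := by
      have : a * c = c * a := mul_comm a c
      omega
    have hcM : m * ((r + d - 2) / (d - 1)) ≤ c := by
      have h2 : (r + d - 2) / (d - 1) ≤ E + 1 := by
        calc (r + d - 2) / (d - 1) ≤ ((a - 2) + (d - 1)) / (d - 1) :=
              Nat.div_le_div_right (by omega)
          _ = E + 1 := Nat.add_div_right _ (by omega)
      have h3 : m * ((r + d - 2) / (d - 1)) ≤ m * (E + 1) := Nat.mul_le_mul_left _ h2
      have h4 : M' * a < c * a := by
        have h6 : r * n ≤ (a - 1) * n := Nat.mul_le_mul_right _ (by omega)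
        omega
      have h5 : M' < c := by
        by_contra hcon
        push_neg at hcon
        exact absurd (Nat.mul_le_mul_right a hcon) (by omega)
      have h8 : m * (E + 1) = M' + 1 := by
        rw [Nat.mul_add, mul_one]
        omega
      omega
    obtain ⟨f, hfr⟩ := lewin_construct a m n d hd r c hcM
    exact ⟨f, by rw [ht_eq, hfr]⟩
end

section
/- Let a, m, n be positive integers with a ≥ 3 and gcd(a, n) = 1. Then g(a, ma+n, ma+2n) = ( m·⌊a/2⌋ − 1 )·a + (a−1)·n, where ⌊x⌋ denotes the greatest integer not exceeding x. -/
/-!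
Writing `x·a + y·(ma+n) + z·(ma+2n) = (x + m(y+z))·a + (y+2z)·n`, an integer `t` is representable
iff `t = k·a + s·n` with `k ≥ m·⌈s/2⌉`. Since `gcd(a, n) = 1`, every `t ≥ (a-1)·n` has exactly one
such decomposition with `s < a`, and it uses the least possible `s`; so `t` is representable iff
this `k` is at least `m·⌈s/2⌉`. The residue `s = a - 1` gives the largest threshold,
`m·⌊a/2⌋·a + (a-1)·n`, and the Frobenius number is one multiple of `a` below it.
-/

namespace Nat

theorem exists_lt_mul_modEq_of_coprime {a n : ℕ} (hcop : a.Coprime n) (ha : 0 < a) (t : ℕ) :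
    ∃ s < a, s * n ≡ t [MOD a] := by
  have : NeZero a := ⟨ha.ne'⟩
  let u := ZMod.unitOfCoprime n hcop.symm
  refine ⟨((t : ZMod a) * ↑u⁻¹).val, ZMod.val_lt _, ?_⟩
  rw [← ZMod.natCast_eq_natCast_iff, Nat.cast_mul, ZMod.natCast_zmod_val,
    ← ZMod.coe_unitOfCoprime n hcop.symm, mul_assoc, Units.inv_mul, mul_one]

theorem exists_eq_mul_add_mul_of_coprime {a n t : ℕ} (hcop : a.Coprime n) (ha : 0 < a)
    (ht : (a - 1) * n ≤ t) : ∃ k, ∃ s < a, t = k * a + s * n := by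
  obtain ⟨s, hsa, hs⟩ := exists_lt_mul_modEq_of_coprime hcop ha t
  have hst : s * n ≤ t := le_trans (Nat.mul_le_mul_right n (by omega)) ht
  obtain ⟨k, hk⟩ := (Nat.modEq_iff_dvd' hst).1 hs
  exact ⟨k, s, hsa, by rw [mul_comm k a, ← hk, Nat.sub_add_cancel hst]⟩

theorem le_of_mul_add_mul_eq_of_coprime {a n k s K S : ℕ} (hcop : a.Coprime n) (hs : s < a)
    (h : K * a + S * n = k * a + s * n) : s ≤ S := by
  have hmod : S * n ≡ s * n [MOD a] := by
    simpa only [Nat.ModEq, mul_comm _ a, Nat.mul_add_mod] using congrArg (· % a) h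
  have hS : S % a = s := by
    rw [Nat.ModEq.cancel_right_of_coprime hcop hmod, Nat.mod_eq_of_lt hs]
  exact hS ▸ Nat.mod_le S a

end Nat

namespace AlmostArithmetic

def Representable (a m n t : ℕ) : Prop :=
  ∃ x y z : ℕ, t = x * a + y * (m * a + n) + z * (m * a + 2 * n)

theorem representable_iff {a m n t : ℕ} :
    Representable a m n t ↔ ∃ k s, t = k * a + s * n ∧ m * ((s + 1) / 2) ≤ k := by
  constructor
  · rintro ⟨x, y, z, rfl⟩
    refine ⟨x + m * (y + z), y + 2 * z, by ring, ?_⟩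
    exact le_add_left (Nat.mul_le_mul_left m (by omega))
  · rintro ⟨k, s, rfl, hk⟩
    have hs : (s + 1) / 2 = s % 2 + s / 2 := by omega
    refine ⟨k - m * ((s + 1) / 2), s % 2, s / 2, ?_⟩
    rw [hs] at hk ⊢
    calc k * a + s * n
        = (k - m * (s % 2 + s / 2) + m * (s % 2 + s / 2)) * a + (s % 2 + 2 * (s / 2)) * n := by
          rw [Nat.sub_add_cancel hk, Nat.mod_add_div]
      _ = _ := by ring

theorem representable_iff_of_lt {a m n k s : ℕ} (hcop : a.Coprime n) (hs : s < a) :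
    Representable a m n (k * a + s * n) ↔ m * ((s + 1) / 2) ≤ k := by
  rw [representable_iff]
  constructor
  · rintro ⟨K, S, h, hK⟩
    have hsS : s ≤ S := Nat.le_of_mul_add_mul_eq_of_coprime hcop hs h.symm
    have hKk : K ≤ k := by
      have : K * a ≤ k * a := by nlinarith [Nat.mul_le_mul_right n hsS]
      exact Nat.le_of_mul_le_mul_right this (by omega)
    calc m * ((s + 1) / 2) ≤ m * ((S + 1) / 2) := Nat.mul_le_mul_left m (by omega)
      _ ≤ k := hK.trans hKk
  · exact fun hk => ⟨k, s, rfl, hk⟩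

end AlmostArithmetic

theorem frobenius_almost_arithmetic_three_general (a m n : ℕ) (ha : 3 ≤ a)
    (hm : 0 < m) (hcop : Nat.Coprime a n) :
    IsGreatest {t : ℕ | ¬ ∃ x y z : ℕ,
        t = x * a + y * (m * a + n) + z * (m * a + 2 * n)}
      ((m * (a / 2) - 1) * a + (a - 1) * n) := by
  have hM : 0 < m * (a / 2) := Nat.mul_pos hm (by omega)
  refine ⟨fun hrep => ?_, fun t ht => ?_⟩
  · have := (AlmostArithmetic.representable_iff_of_lt hcop (show a - 1 < a by omega)).1 hrep
    rw [show (a - 1 + 1) / 2 = a / 2 by omega] at this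
    omega
  · by_contra! hlt
    obtain ⟨k, s, hsa, rfl⟩ := Nat.exists_eq_mul_add_mul_of_coprime hcop (by omega)
      (le_add_left le_rfl |>.trans hlt.le)
    refine ht ((AlmostArithmetic.representable_iff_of_lt hcop hsa).2 ?_)
    have hk : m * (a / 2) - 1 < k := by
      refine Nat.lt_of_mul_lt_mul_right (a := a) ?_
      nlinarith [Nat.mul_le_mul_right n (show s ≤ a - 1 by omega)]
    calc m * ((s + 1) / 2) ≤ m * (a / 2) := Nat.mul_le_mul_left m (by omega)
      _ ≤ k := by omega

/-- For positive integers `a, m, n` with `a ≥ 3` and `gcd(a, n) = 1`,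
`g(a, m*a+n, m*a+2n) = (m*⌊a/2⌋ - 1)*a + (a-1)*n`. -/
theorem frobenius_almost_arithmetic_three (a m n : ℕ) (ha : 3 ≤ a)
    (hm : 0 < m) (hn : 0 < n) (hcop : Nat.Coprime a n) :
    IsGreatest {t : ℕ | ¬ ∃ x y z : ℕ,
        t = x * a + y * (m * a + n) + z * (m * a + 2 * n)}
      ((m * (a / 2) - 1) * a + (a - 1) * n) :=
  frobenius_almost_arithmetic_three_general a m n ha hm hcop
end

section
/- (Davison's lower bound) Let a, b, c be pairwise coprime integers, each at least 2. Then g(a, b, c) ≥ √(3abc) − a − b − c. -/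
private def dval (b c y z : ℕ) : ℕ := y * b + z * c

private def DS (a b c y z : ℕ) : Prop :=
  ∀ y' z' : ℕ, ((dval b c y' z' : ZMod a) = (dval b c y z : ZMod a)) →
    dval b c y z ≤ dval b c y' z' ∧ (dval b c y' z' = dval b c y z → y ≤ y')

private lemma DS_zero (a b c : ℕ) : DS a b c 0 0 := by
  intro y' z' _
  simp [dval]

private lemma exists_DS (a b c y z : ℕ) :
    ∃ y0 z0, DS a b c y0 z0 ∧ ((dval b c y0 z0 : ZMod a) = (dval b c y z : ZMod a)) ∧
      (dval b c y0 z0 < dval b c y z ∨ (dval b c y0 z0 = dval b c y z ∧ y0 ≤ y)) := by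
  classical
  set T : Set ℕ := {n | ∃ u w, dval b c u w = n ∧ (dval b c u w : ZMod a) = (dval b c y z : ZMod a)}
    with hT
  have hTne : dval b c y z ∈ T := ⟨y, z, rfl, rfl⟩
  obtain ⟨u1, w1, hval1, hcong1⟩ := Nat.sInf_mem (⟨_, hTne⟩ : T.Nonempty)
  set Y : Set ℕ := {u | ∃ w, dval b c u w = sInf T ∧ (dval b c u w : ZMod a) = (dval b c y z : ZMod a)}
    with hY
  have hYne : u1 ∈ Y := ⟨w1, hval1, hcong1⟩
  obtain ⟨z0, hz0val, hz0cong⟩ := Nat.sInf_mem (⟨_, hYne⟩ : Y.Nonempty)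
  refine ⟨sInf Y, z0, ?_, hz0cong, ?_⟩
  · intro y' z' hco
    have hmem : dval b c y' z' ∈ T := ⟨y', z', rfl, hco.trans hz0cong⟩
    constructor
    · rw [hz0val]; exact Nat.sInf_le hmem
    · intro he
      have hy' : y' ∈ Y := ⟨z', by rw [he, hz0val], hco.trans hz0cong⟩
      exact Nat.sInf_le hy'
  · have hle : sInf T ≤ dval b c y z := Nat.sInf_le hTne
    rcases lt_or_eq_of_le hle with h | h
    · left; rw [hz0val]; exact h
    · right
      refine ⟨by rw [hz0val, h], ?_⟩
      have : y ∈ Y := ⟨z, by rw [h], rfl⟩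
      exact Nat.sInf_le this

private lemma DS_unique (a b c : ℕ) (hc : 0 < c) {y z y' z' : ℕ}
    (h : DS a b c y z) (h' : DS a b c y' z')
    (hco : (dval b c y' z' : ZMod a) = (dval b c y z : ZMod a)) : y = y' ∧ z = z' := by
  obtain ⟨h1, h2⟩ := h y' z' hco
  obtain ⟨h1', h2'⟩ := h' y z hco.symm
  have hval : dval b c y' z' = dval b c y z := le_antisymm h1' h1
  have hy : y = y' := le_antisymm (h2 hval) (h2' hval.symm)
  refine ⟨hy, ?_⟩
  have : y * b + z * c = y' * b + z' * c := hval.symm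
  rw [← hy] at this
  have hzz : z * c = z' * c := by omega
  exact Nat.eq_of_mul_eq_mul_right hc hzz

private lemma DS_down_left (a b c : ℕ) {y z : ℕ} (h : DS a b c (y+1) z) : DS a b c y z := by
  intro y' z' hco
  have key : ∀ u w : ℕ, dval b c (u+1) w = dval b c u w + b := by
    intro u w; simp [dval]; ring
  have hco' : (dval b c (y'+1) z' : ZMod a) = (dval b c (y+1) z : ZMod a) := by
    rw [key, key]; push_cast; rw [hco]
  obtain ⟨h1, h2⟩ := h (y'+1) z' hco'
  rw [key, key] at h1 h2
  refine ⟨by omega, fun he => by have := h2 (by omega); omega⟩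

private lemma DS_down_right (a b c : ℕ) {y z : ℕ} (h : DS a b c y (z+1)) : DS a b c y z := by
  intro y' z' hco
  have key : ∀ u w : ℕ, dval b c u (w+1) = dval b c u w + c := by
    intro u w; simp [dval]; ring
  have hco' : (dval b c y' (z'+1) : ZMod a) = (dval b c y (z+1) : ZMod a) := by
    rw [key, key]; push_cast; rw [hco]
  obtain ⟨h1, h2⟩ := h y' (z'+1) hco'
  rw [key, key] at h1 h2
  refine ⟨by omega, fun he => h2 (by omega)⟩

private lemma DS_down (a b c : ℕ) {y z : ℕ} (h : DS a b c y z) :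
    ∀ y' z', y' ≤ y → z' ≤ z → DS a b c y' z' := by
  have hz : ∀ k y z, DS a b c y (z + k) → DS a b c y z := by
    intro k
    induction k with
    | zero => intro y z h; simpa using h
    | succ n ih =>
      intro y z h
      exact ih y z (DS_down_right a b c (by rw [show z + n + 1 = z + (n+1) by omega]; exact h))
  have hy : ∀ k y z, DS a b c (y + k) z → DS a b c y z := by
    intro k
    induction k with
    | zero => intro y z h; simpa using h
    | succ n ih =>
      intro y z h
      exact ih y z (DS_down_left a b c (by rw [show y + n + 1 = y + (n+1) by omega]; exact h))
  intro y' z' hy' hz'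
  have h1 : DS a b c y' z := hy (y - y') y' z (by rw [show y' + (y - y') = y by omega]; exact h)
  exact hz (z - z') y' z' (by rw [show z' + (z - z') = z by omega]; exact h1)

private lemma DS_kill (a b c : ℕ) (W1 W2 : ℤ)
    (hcong : ((W1 * b + W2 * c : ℤ) : ZMod a) = 0)
    (hpos : 0 < W1 * b + W2 * c ∨ (W1 * b + W2 * c = 0 ∧ 0 < W1))
    {y z : ℕ} (hD : DS a b c y z) (h1 : W1 ≤ (y:ℤ)) (h2 : W2 ≤ (z:ℤ)) : False := by
  set y' := ((y:ℤ) - W1).toNat with hy'def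
  set z' := ((z:ℤ) - W2).toNat with hz'def
  have hy' : (y' : ℤ) = (y:ℤ) - W1 := Int.toNat_of_nonneg (by omega)
  have hz' : (z' : ℤ) = (z:ℤ) - W2 := Int.toNat_of_nonneg (by omega)
  have hvz : (dval b c y' z' : ℤ) = (dval b c y z : ℤ) - (W1 * b + W2 * c) := by
    simp only [dval]; push_cast; rw [hy', hz']; ring
  have hco : (dval b c y' z' : ZMod a) = (dval b c y z : ZMod a) := by
    have h0 : (((dval b c y' z' : ℕ) : ℤ) : ZMod a) = (((dval b c y z : ℕ) : ℤ) : ZMod a) := by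
      rw [hvz, Int.cast_sub, hcong, sub_zero]
    simpa using h0
  obtain ⟨hle, htie⟩ := hD y' z' hco
  have hleZ : (dval b c y z : ℤ) ≤ (dval b c y' z' : ℤ) := by exact_mod_cast hle
  rcases hpos with hS | ⟨hS0, hW1⟩
  · omega
  · rw [hS0, sub_zero] at hvz
    have hne : dval b c y' z' = dval b c y z := by exact_mod_cast hvz
    have hyy := htie hne
    omega

private lemma davison_key (P Q U V : ℝ) (h0P : 0 ≤ P) (h0Q : 0 ≤ Q)
    (hPU : P ≤ U) (hQV : Q ≤ V) (h : P + V ≤ U + Q) :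
    3 * (U*Q + P*V - P*Q) ≤ (U + Q)^2 := by
  nlinarith [mul_nonneg h0P (by linarith : (0:ℝ) ≤ U + Q - P - V),
    sq_nonneg (2*P - U), sq_nonneg (U - 2*Q)]


set_option maxHeartbeats 1000000 in
/-- **Davison's lower bound.** For pairwise coprime integers `a, b, c ≥ 2`,
the Frobenius number satisfies `g(a,b,c) ≥ √(3abc) - a - b - c`. -/
theorem davison_lower_bound (a b c : ℕ) (ha : 2 ≤ a) (hb : 2 ≤ b) (hc : 2 ≤ c)
    (hab : Nat.Coprime a b) (hac : Nat.Coprime a c) (hbc : Nat.Coprime b c)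
    (g : ℕ)
    (hg : IsGreatest {t : ℕ | ¬ ∃ x y z : ℕ, t = x * a + y * b + z * c} g) :
    Real.sqrt (3 * a * b * c) - a - b - c ≤ (g : ℝ) := by
  classical
  haveI : NeZero a := ⟨by omega⟩
  have hb0 : 0 < b := by omega
  have hc0 : 0 < c := by omega
  have ha0 : 0 < a := by omega
  -- Lemma A: values of minimal pairs are at most g + a
  have lemA : ∀ y z : ℕ, DS a b c y z → (dval b c y z : ℝ) ≤ (g:ℝ) + a := by
    intro y z hD
    by_cases hcase : dval b c y z ≤ a
    · have h1 : (0:ℝ) ≤ g := Nat.cast_nonneg g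
      have h2 : (dval b c y z : ℝ) ≤ (a:ℝ) := Nat.cast_le.2 hcase
      linarith
    · push_neg at hcase
      set t := dval b c y z - a with ht
      have htmem : t ∈ {t : ℕ | ¬ ∃ x y z : ℕ, t = x * a + y * b + z * c} := by
        rintro ⟨x, u, w, he⟩
        have he' : t = x * a + dval b c u w := by
          rw [he]; show x * a + u * b + w * c = x * a + (u * b + w * c); omega
        have hvt : dval b c y z = x * a + a + dval b c u w := by omega
        have hco : (dval b c u w : ZMod a) = (dval b c y z : ZMod a) := by
          rw [hvt]; push_cast [ZMod.natCast_self]; ring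
        have hle := (hD u w hco).1
        have hxa : 0 ≤ x * a := Nat.zero_le _
        generalize hgen : x * a = xa at hvt hxa
        omega
      have hgle : t ≤ g := hg.2 htmem
      have : dval b c y z = t + a := by omega
      rw [this]; push_cast; linarith [(Nat.cast_le (α := ℝ)).2 hgle]
  -- definitions of u and v
  have hDS00 : DS a b c 0 0 := DS_zero a b c
  have hu_ex : (¬ DS a b c a 0) := by
    intro hDa
    have hco : (dval b c 0 0 : ZMod a) = (dval b c a 0 : ZMod a) := by
      show ((0 * b + 0 * c : ℕ) : ZMod a) = ((a * b + 0 * c : ℕ) : ZMod a)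
      push_cast [ZMod.natCast_self]; ring
    have h1 := (hDa 0 0 hco).1
    have h2 : dval b c a 0 = a * b := by simp [dval]
    have h3 : dval b c 0 0 = 0 := by simp [dval]
    rw [h2, h3] at h1
    exact (Nat.mul_pos ha0 hb0).not_ge h1
  have hv_ex : (¬ DS a b c 0 a) := by
    intro hDa
    have hco : (dval b c 0 0 : ZMod a) = (dval b c 0 a : ZMod a) := by
      show ((0 * b + 0 * c : ℕ) : ZMod a) = ((0 * b + a * c : ℕ) : ZMod a)
      push_cast [ZMod.natCast_self]; ring
    have h1 := (hDa 0 0 hco).1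
    have h2 : dval b c 0 a = a * c := by simp [dval]
    have h3 : dval b c 0 0 = 0 := by simp [dval]
    rw [h2, h3] at h1
    exact (Nat.mul_pos ha0 hc0).not_ge h1
  set u := sInf {k | ¬ DS a b c k 0} with hudef
  set v := sInf {k | ¬ DS a b c 0 k} with hvdef
  have hu_not : ¬ DS a b c u 0 :=
    Nat.sInf_mem (⟨a, hu_ex⟩ : Set.Nonempty {k | ¬ DS a b c k 0})
  have hv_not : ¬ DS a b c 0 v :=
    Nat.sInf_mem (⟨a, hv_ex⟩ : Set.Nonempty {k | ¬ DS a b c 0 k})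
  have hu_min : ∀ k, k < u → DS a b c k 0 := by
    intro k hk
    by_contra hn
    exact Nat.notMem_of_lt_sInf hk hn
  have hv_min : ∀ k, k < v → DS a b c 0 k := by
    intro k hk
    by_contra hn
    exact Nat.notMem_of_lt_sInf hk hn
  have hu1 : 1 ≤ u := by
    rcases Nat.eq_zero_or_pos u with h | h
    · exact absurd (h ▸ hDS00) hu_not
    · exact h
  have hv1 : 1 ≤ v := by
    rcases Nat.eq_zero_or_pos v with h | h
    · exact absurd (h ▸ hDS00) hv_not
    · exact h
  have hbound : ∀ y z : ℕ, DS a b c y z → y < u ∧ z < v := by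
    intro y z hD
    constructor
    · by_contra h
      push_neg at h
      exact hu_not (DS_down a b c hD u 0 h (Nat.zero_le _))
    · by_contra h
      push_neg at h
      exact hv_not (DS_down a b c hD 0 v (Nat.zero_le _) h)
  -- the finite sets
  set rect : Finset (ℕ × ℕ) := Finset.range u ×ˢ Finset.range v with hrectdef
  set R : Finset (ℕ × ℕ) := rect.filter (fun x => DS a b c x.1 x.2) with hRdef
  have hmemR : ∀ x : ℕ × ℕ, x ∈ R ↔ DS a b c x.1 x.2 := by
    intro x
    constructor
    · intro hx
      exact (Finset.mem_filter.1 hx).2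
    · intro hx
      refine Finset.mem_filter.2 ⟨?_, hx⟩
      obtain ⟨h1, h2⟩ := hbound x.1 x.2 hx
      exact Finset.mem_product.2 ⟨Finset.mem_range.2 h1, Finset.mem_range.2 h2⟩
  have hcardR : R.card = a := by
    rw [← ZMod.card a, ← Finset.card_univ]
    apply Finset.card_bij (fun (x : ℕ × ℕ) (_ : x ∈ R) => ((dval b c x.1 x.2 : ℕ) : ZMod a))
    · intro x hx; exact Finset.mem_univ _
    · intro x hx x' hx' hco
      obtain ⟨h1, h2⟩ := DS_unique a b c hc0 ((hmemR x).1 hx) ((hmemR x').1 hx') hco.symm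
      exact Prod.ext h1 h2
    · intro r _
      have hbu : IsUnit ((b : ℕ) : ZMod a) := (ZMod.isUnit_iff_coprime b a).mpr hab.symm
      set yr := (r * ((b : ℕ) : ZMod a)⁻¹).val with hyrdef
      have h1 : ((dval b c yr 0 : ℕ) : ZMod a) = r := by
        show (((yr * b + 0 * c : ℕ)) : ZMod a) = r
        push_cast
        rw [ZMod.natCast_rightInverse _]
        rw [mul_assoc, ZMod.inv_mul_of_unit _ hbu]
        ring
      obtain ⟨y0, z0, hD0, hco0, _⟩ := exists_DS a b c yr 0
      refine ⟨(y0, z0), (hmemR _).2 hD0, ?_⟩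
      rw [hco0, h1]
  -- the L-shape structure
  set EF : Finset (ℕ × ℕ) := rect.filter (fun x => ¬ DS a b c x.1 x.2) with hEFdef
  have hmemEF : ∀ x : ℕ × ℕ, x ∈ EF ↔ (x.1 < u ∧ x.2 < v ∧ ¬ DS a b c x.1 x.2) := by
    intro x
    rw [hEFdef, Finset.mem_filter, hrectdef, Finset.mem_product, Finset.mem_range,
      Finset.mem_range]
    tauto
  obtain ⟨p, q, hp1, hq1, hpu, hqv, hchar⟩ :
      ∃ p q, 1 ≤ p ∧ 1 ≤ q ∧ p ≤ u ∧ q ≤ v ∧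
        ∀ y z, y < u → z < v → (¬ DS a b c y z ↔ (p ≤ y ∧ q ≤ z)) := by
    by_cases hE : EF.Nonempty
    · set P1 := EF.image Prod.fst with hP1def
      set P2 := EF.image Prod.snd with hP2def
      have hP1ne : P1.Nonempty := hE.image _
      have hP2ne : P2.Nonempty := hE.image _
      set p := P1.min' hP1ne with hpdef
      set q := P2.min' hP2ne with hqdef
      have hpmin : ∀ x ∈ EF, p ≤ x.1 := by
        intro x hx
        exact Finset.min'_le _ _ (Finset.mem_image_of_mem _ hx)
      have hqmin : ∀ x ∈ EF, q ≤ x.2 := by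
        intro x hx
        exact Finset.min'_le _ _ (Finset.mem_image_of_mem _ hx)
      obtain ⟨xp, hxpE, hxp1⟩ := Finset.mem_image.1 (P1.min'_mem hP1ne)
      obtain ⟨xq, hxqE, hxq2⟩ := Finset.mem_image.1 (P2.min'_mem hP2ne)
      -- column p minimum
      set col := (EF.filter (fun x => x.1 = p)).image Prod.snd with hcoldef
      have hcolne : col.Nonempty :=
        ⟨xp.2, Finset.mem_image_of_mem _ (Finset.mem_filter.2 ⟨hxpE, hxp1⟩)⟩
      set z1 := col.min' hcolne with hz1def
      have hz1E : (p, z1) ∈ EF := by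
        obtain ⟨x, hx, hx2⟩ := Finset.mem_image.1 (col.min'_mem hcolne)
        obtain ⟨hxE, hx1⟩ := Finset.mem_filter.1 hx
        have : x = (p, z1) := Prod.ext hx1 hx2
        rwa [← this]
      have hz1colmin : ∀ x ∈ EF, x.1 = p → z1 ≤ x.2 := by
        intro x hx h1
        exact Finset.min'_le _ _ (Finset.mem_image_of_mem _ (Finset.mem_filter.2 ⟨hx, h1⟩))
      -- row q minimum
      set row := (EF.filter (fun x => x.2 = q)).image Prod.fst with hrowdef
      have hrowne : row.Nonempty :=
        ⟨xq.1, Finset.mem_image_of_mem _ (Finset.mem_filter.2 ⟨hxqE, hxq2⟩)⟩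
      set y2 := row.min' hrowne with hy2def
      have hy2E : (y2, q) ∈ EF := by
        obtain ⟨x, hx, hx1⟩ := Finset.mem_image.1 (row.min'_mem hrowne)
        obtain ⟨hxE, hx2⟩ := Finset.mem_filter.1 hx
        have : x = (y2, q) := Prod.ext hx1 hx2
        rwa [← this]
      have hy2rowmin : ∀ x ∈ EF, x.2 = q → y2 ≤ x.1 := by
        intro x hx h2
        exact Finset.min'_le _ _ (Finset.mem_image_of_mem _ (Finset.mem_filter.2 ⟨hx, h2⟩))
      -- basic facts
      obtain ⟨hpu', hz1v, hnDpz1⟩ := (hmemEF _).1 hz1E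
      obtain ⟨hy2u, hqv', hnDy2q⟩ := (hmemEF _).1 hy2E
      have hp1 : 1 ≤ p := by
        rcases Nat.eq_zero_or_pos p with h | h
        · exact absurd (hv_min z1 hz1v) (h ▸ hnDpz1)
        · exact h
      have hq1 : 1 ≤ q := by
        rcases Nat.eq_zero_or_pos q with h | h
        · exact absurd (hu_min y2 hy2u) (h ▸ hnDy2q)
        · exact h
      have hz1pos : 1 ≤ z1 := by
        rcases Nat.eq_zero_or_pos z1 with h | h
        · exact absurd (hu_min p hpu') (h ▸ hnDpz1)
        · exact h
      have hy2pos : 1 ≤ y2 := by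
        rcases Nat.eq_zero_or_pos y2 with h | h
        · exact absurd (hv_min q hqv') (h ▸ hnDy2q)
        · exact h
      have hqz1 : q ≤ z1 := hqmin _ hz1E
      have hpy2 : p ≤ y2 := hpmin _ hy2E
      -- neighbours inside D
      have hDp1z1 : DS a b c (p-1) z1 := by
        by_contra hn
        have : (p-1, z1) ∈ EF := (hmemEF _).2 ⟨by omega, hz1v, hn⟩
        have := hpmin _ this
        simp at this
        omega
      have hDpz1m : DS a b c p (z1-1) := by
        by_contra hn
        have hmem : (p, z1-1) ∈ EF := (hmemEF _).2 ⟨hpu', by omega, hn⟩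
        have := hz1colmin _ hmem rfl
        simp at this
        omega
      have hDy2m : DS a b c (y2-1) q := by
        by_contra hn
        have hmem : (y2-1, q) ∈ EF := (hmemEF _).2 ⟨by omega, hqv', hn⟩
        have := hy2rowmin _ hmem rfl
        simp at this
        omega
      have hDy2qm : DS a b c y2 (q-1) := by
        by_contra hn
        have hmem : (y2, q-1) ∈ EF := (hmemEF _).2 ⟨hy2u, by omega, hn⟩
        have := hqmin _ hmem
        simp at this
        omega
      -- the key claim
      have hKey : ¬ DS a b c p q := by
        intro hDpq
        have hqlt : q < z1 := by
          rcases lt_or_eq_of_le hqz1 with h | h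
          · exact h
          · exact absurd hDpq (h ▸ hnDpz1)
        have hplt : p < y2 := by
          rcases lt_or_eq_of_le hpy2 with h | h
          · exact h
          · exact absurd hDpq (h ▸ hnDy2q)
        -- witness for (p, z1)
        obtain ⟨s, t, hDst, hcost, hstrict⟩ := exists_DS a b c p z1
        have hst_rect := hbound s t hDst
        have hstrict1 : dval b c s t < dval b c p z1 ∨
            (dval b c s t = dval b c p z1 ∧ s < p) := by
          rcases hstrict with h | ⟨he, hle⟩
          · exact Or.inl h
          · refine Or.inr ⟨he, ?_⟩
            rcases lt_or_eq_of_le hle with h | h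
            · exact h
            · exfalso
              have ht : t = z1 := by
                have : s * b + t * c = p * b + z1 * c := he
                rw [h] at this
                have hzz : t * c = z1 * c := by omega
                exact Nat.eq_of_mul_eq_mul_right hc0 hzz
              rw [h, ht] at hDst
              exact hnDpz1 hDst
        set W1 : ℤ := (p : ℤ) - s with hW1def
        set W2 : ℤ := (z1 : ℤ) - t with hW2def
        have hvdiff : (W1 * b + W2 * c : ℤ) = (dval b c p z1 : ℤ) - (dval b c s t : ℤ) := by
          simp only [dval]; push_cast; rw [hW1def, hW2def]; ring
        have hcW : ((W1 * b + W2 * c : ℤ) : ZMod a) = 0 := by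
          rw [hvdiff]
          push_cast
          rw [hcost]
          ring
        have hposW : 0 < W1 * b + W2 * c ∨ (W1 * b + W2 * c = 0 ∧ 0 < W1) := by
          rcases hstrict1 with h | ⟨he, hlt⟩
          · left
            rw [hvdiff]
            have : (dval b c s t : ℤ) < (dval b c p z1 : ℤ) := by exact_mod_cast h
            omega
          · right
            constructor
            · rw [hvdiff]
              have : (dval b c s t : ℤ) = (dval b c p z1 : ℤ) := by exact_mod_cast he
              omega
            · rw [hW1def]; omega
        have hW1p : W1 = (p : ℤ) := by
          by_contra hne
          refine DS_kill a b c W1 W2 hcW hposW hDp1z1 ?_ ?_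
          · push_cast [Nat.cast_sub hp1]
            rw [hW1def]
            omega
          · rw [hW2def]; omega
        have hW2q : (q : ℤ) < W2 := by
          by_contra h
          push_neg at h
          exact DS_kill a b c W1 W2 hcW hposW hDpq (by omega) h
        -- witness for (y2, q)
        obtain ⟨s', t', hDst', hcost', hstrict'⟩ := exists_DS a b c y2 q
        have hst_rect' := hbound s' t' hDst'
        have hstrict1' : dval b c s' t' < dval b c y2 q ∨
            (dval b c s' t' = dval b c y2 q ∧ s' < y2) := by
          rcases hstrict' with h | ⟨he, hle⟩
          · exact Or.inl h
          · refine Or.inr ⟨he, ?_⟩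
            rcases lt_or_eq_of_le hle with h | h
            · exact h
            · exfalso
              have ht : t' = q := by
                have : s' * b + t' * c = y2 * b + q * c := he
                rw [h] at this
                have hzz : t' * c = q * c := by omega
                exact Nat.eq_of_mul_eq_mul_right hc0 hzz
              rw [h, ht] at hDst'
              exact hnDy2q hDst'
        set V1 : ℤ := (y2 : ℤ) - s' with hV1def
        set V2 : ℤ := (q : ℤ) - t' with hV2def
        have hvdiff' : (V1 * b + V2 * c : ℤ) = (dval b c y2 q : ℤ) - (dval b c s' t' : ℤ) := by
          simp only [dval]; push_cast; rw [hV1def, hV2def]; ring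
        have hcV : ((V1 * b + V2 * c : ℤ) : ZMod a) = 0 := by
          rw [hvdiff']
          push_cast
          rw [hcost']
          ring
        have hposV : 0 < V1 * b + V2 * c ∨ (V1 * b + V2 * c = 0 ∧ 0 < V1) := by
          rcases hstrict1' with h | ⟨he, hlt⟩
          · left
            rw [hvdiff']
            have : (dval b c s' t' : ℤ) < (dval b c y2 q : ℤ) := by exact_mod_cast h
            omega
          · right
            constructor
            · rw [hvdiff']
              have : (dval b c s' t' : ℤ) = (dval b c y2 q : ℤ) := by exact_mod_cast he
              omega
            · rw [hV1def]; omega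
        have hV2q : V2 = (q : ℤ) := by
          by_contra hne
          refine DS_kill a b c V1 V2 hcV hposV hDy2qm ?_ ?_
          · rw [hV1def]; omega
          · push_cast [Nat.cast_sub hq1]
            rw [hV2def]
            omega
        have hV1p : (p : ℤ) < V1 := by
          by_contra h
          push_neg at h
          exact DS_kill a b c V1 V2 hcV hposV hDpq h (by omega)
        -- compare the two vectors
        rcases le_or_gt (W1 * b + W2 * c) (V1 * b + V2 * c) with hcmp | hcmp
        · -- sigma = V - W  kills a bottom-row element
          set S1 : ℤ := V1 - W1 with hS1def
          set S2 : ℤ := V2 - W2 with hS2def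
          have hcS : ((S1 * b + S2 * c : ℤ) : ZMod a) = 0 := by
            have : (S1 * b + S2 * c : ℤ) = (V1 * b + V2 * c) - (W1 * b + W2 * c) := by
              rw [hS1def, hS2def]; ring
            rw [this]
            push_cast
            rw [show ((V1 : ZMod a) * b + V2 * c) - ((W1 : ZMod a) * b + W2 * c) =
              ((V1 * b + V2 * c : ℤ) : ZMod a) - ((W1 * b + W2 * c : ℤ) : ZMod a) by push_cast; ring]
            rw [hcV, hcW, sub_zero]
          have hposS : 0 < S1 * b + S2 * c ∨ (S1 * b + S2 * c = 0 ∧ 0 < S1) := by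
            have hSsum : (S1 * b + S2 * c : ℤ) = (V1 * b + V2 * c) - (W1 * b + W2 * c) := by
              rw [hS1def, hS2def]; ring
            rcases lt_or_eq_of_le hcmp with h | h
            · left; omega
            · right
              refine ⟨by omega, ?_⟩
              rw [hS1def]
              omega
          set n := (S1.toNat) with hndef
          have hn1 : 1 ≤ n := by
            rw [hndef, hS1def]
            omega
          have hnu : n < u := by
            rw [hndef, hS1def]
            omega
          refine DS_kill a b c S1 S2 hcS hposS (hu_min n hnu) ?_ ?_
          · rw [hndef]; omega
          · show S2 ≤ ((0:ℕ) : ℤ)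
            rw [hS2def]
            omega
        · -- sigma = W - V  kills a left-column element
          set S1 : ℤ := W1 - V1 with hS1def
          set S2 : ℤ := W2 - V2 with hS2def
          have hcS : ((S1 * b + S2 * c : ℤ) : ZMod a) = 0 := by
            have : (S1 * b + S2 * c : ℤ) = (W1 * b + W2 * c) - (V1 * b + V2 * c) := by
              rw [hS1def, hS2def]; ring
            rw [this]
            push_cast
            rw [show ((W1 : ZMod a) * b + W2 * c) - ((V1 : ZMod a) * b + V2 * c) =
              ((W1 * b + W2 * c : ℤ) : ZMod a) - ((V1 * b + V2 * c : ℤ) : ZMod a) by push_cast; ring]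
            rw [hcV, hcW, sub_zero]
          have hposS : 0 < S1 * b + S2 * c ∨ (S1 * b + S2 * c = 0 ∧ 0 < S1) := by
            have hSsum : (S1 * b + S2 * c : ℤ) = (W1 * b + W2 * c) - (V1 * b + V2 * c) := by
              rw [hS1def, hS2def]; ring
            left
            omega
          set n := (S2.toNat) with hndef
          have hn1 : 1 ≤ n := by
            rw [hndef, hS2def]
            omega
          have hnv : n < v := by
            rw [hndef, hS2def]
            omega
          refine DS_kill a b c S1 S2 hcS hposS (hv_min n hnv) ?_ ?_
          · show S1 ≤ ((0:ℕ) : ℤ)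
            rw [hS1def]
            omega
          · rw [hndef]; omega
      -- conclude the characterization
      refine ⟨p, q, hp1, hq1, by omega, by omega, ?_⟩
      intro y z hy hz
      constructor
      · intro hnD
        have hmem : (y, z) ∈ EF := (hmemEF _).2 ⟨hy, hz, hnD⟩
        exact ⟨hpmin _ hmem, hqmin _ hmem⟩
      · rintro ⟨h1, h2⟩ hD
        exact hKey (DS_down a b c hD p q h1 h2)
    · refine ⟨u, v, hu1, hv1, le_rfl, le_rfl, ?_⟩
      intro y z hy hz
      constructor
      · intro hnD
        exact absurd ⟨(y, z), (hmemEF _).2 ⟨hy, hz, hnD⟩⟩ hE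
      · rintro ⟨h1, h2⟩
        omega
  -- the corners are minimal pairs
  have hcorner1 : DS a b c (u-1) (q-1) := by
    by_contra hn
    have := (hchar (u-1) (q-1) (by omega) (by omega)).1 hn
    omega
  have hcorner2 : DS a b c (p-1) (v-1) := by
    by_contra hn
    have := (hchar (p-1) (v-1) (by omega) (by omega)).1 hn
    omega
  -- cardinality identity
  have hfilter_eq : R = rect.filter (fun x => ¬ (p ≤ x.1 ∧ q ≤ x.2)) := by
    apply Finset.filter_congr
    intro x hx
    rw [hrectdef, Finset.mem_product, Finset.mem_range, Finset.mem_range] at hx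
    constructor
    · intro hD hpq
      exact ((hchar x.1 x.2 hx.1 hx.2).2 hpq) hD
    · intro hn
      by_contra hD
      exact hn ((hchar x.1 x.2 hx.1 hx.2).1 hD)
  have hPeq : rect.filter (fun x => p ≤ x.1 ∧ q ≤ x.2) = Finset.Ico p u ×ˢ Finset.Ico q v := by
    ext x
    rw [Finset.mem_filter, hrectdef, Finset.mem_product, Finset.mem_product,
      Finset.mem_range, Finset.mem_range, Finset.mem_Ico, Finset.mem_Ico]
    tauto
  have hsplit := Finset.card_filter_add_card_filter_not
    (s := rect) (p := fun x => p ≤ x.1 ∧ q ≤ x.2)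
  rw [hPeq, ← hfilter_eq, hcardR] at hsplit
  have hrectcard : rect.card = u * v := by
    rw [hrectdef, Finset.card_product, Finset.card_range, Finset.card_range]
  have hIcocard : (Finset.Ico p u ×ˢ Finset.Ico q v).card = (u - p) * (v - q) := by
    rw [Finset.card_product, Nat.card_Ico, Nat.card_Ico]
  rw [hrectcard, hIcocard] at hsplit
  -- final assembly over the reals
  have hG0 : (0:ℝ) ≤ (g:ℝ) + a + b + c := by positivity
  have hUQ : (u:ℝ) * b + (q:ℝ) * c ≤ (g:ℝ) + a + b + c := by
    have h1 := lemA _ _ hcorner1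
    have he : ((dval b c (u-1) (q-1) : ℕ) : ℝ) = (u:ℝ) * b + (q:ℝ) * c - b - c := by
      show (((u-1) * b + (q-1) * c : ℕ) : ℝ) = _
      push_cast [Nat.cast_sub hu1, Nat.cast_sub hq1]
      ring
    rw [he] at h1
    linarith
  have hPV : (p:ℝ) * b + (v:ℝ) * c ≤ (g:ℝ) + a + b + c := by
    have h1 := lemA _ _ hcorner2
    have he : ((dval b c (p-1) (v-1) : ℕ) : ℝ) = (p:ℝ) * b + (v:ℝ) * c - b - c := by
      show (((p-1) * b + (v-1) * c : ℕ) : ℝ) = _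
      push_cast [Nat.cast_sub hp1, Nat.cast_sub hv1]
      ring
    rw [he] at h1
    linarith
  have hA : (3:ℝ) * a * b * c =
      3 * (((u:ℝ)*b) * ((q:ℝ)*c) + ((p:ℝ)*b) * ((v:ℝ)*c) - ((p:ℝ)*b) * ((q:ℝ)*c)) := by
    have h := congrArg (Nat.cast : ℕ → ℝ) hsplit
    push_cast [Nat.cast_sub hpu, Nat.cast_sub hqv] at h
    linear_combination (3 * (b:ℝ) * c) * h
  have hsqle : (3:ℝ) * a * b * c ≤ ((g:ℝ) + a + b + c)^2 := by
    rcases le_total ((p:ℝ) * b + (v:ℝ) * c) ((u:ℝ) * b + (q:ℝ) * c) with hcmp | hcmp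
    · have hkey := davison_key ((p:ℝ)*b) ((q:ℝ)*c) ((u:ℝ)*b) ((v:ℝ)*c)
        (by positivity) (by positivity)
        (mul_le_mul_of_nonneg_right (by exact_mod_cast hpu) (Nat.cast_nonneg b))
        (mul_le_mul_of_nonneg_right (by exact_mod_cast hqv) (Nat.cast_nonneg c))
        hcmp
      rw [hA]
      calc 3 * (((u:ℝ)*b) * ((q:ℝ)*c) + ((p:ℝ)*b) * ((v:ℝ)*c) - ((p:ℝ)*b) * ((q:ℝ)*c))
          ≤ ((u:ℝ)*b + (q:ℝ)*c)^2 := hkey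
        _ ≤ ((g:ℝ) + a + b + c)^2 := by
            apply pow_le_pow_left₀ (by positivity) hUQ
    · have hkey := davison_key ((q:ℝ)*c) ((p:ℝ)*b) ((v:ℝ)*c) ((u:ℝ)*b)
        (by positivity) (by positivity)
        (mul_le_mul_of_nonneg_right (by exact_mod_cast hqv) (Nat.cast_nonneg c))
        (mul_le_mul_of_nonneg_right (by exact_mod_cast hpu) (Nat.cast_nonneg b))
        (by linarith)
      rw [hA]
      calc 3 * (((u:ℝ)*b) * ((q:ℝ)*c) + ((p:ℝ)*b) * ((v:ℝ)*c) - ((p:ℝ)*b) * ((q:ℝ)*c))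
          = 3 * (((v:ℝ)*c) * ((p:ℝ)*b) + ((q:ℝ)*c) * ((u:ℝ)*b) - ((q:ℝ)*c) * ((p:ℝ)*b)) := by
            ring
        _ ≤ ((v:ℝ)*c + (p:ℝ)*b)^2 := hkey
        _ ≤ ((g:ℝ) + a + b + c)^2 := by
            apply pow_le_pow_left₀ (by positivity)
            linarith
  have hfin : Real.sqrt (3 * a * b * c) ≤ (g:ℝ) + a + b + c := by
    calc Real.sqrt (3 * a * b * c) ≤ Real.sqrt (((g:ℝ) + a + b + c)^2) :=
          Real.sqrt_le_sqrt hsqle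
      _ = (g:ℝ) + a + b + c := Real.sqrt_sq hG0
  linarith
end

section
/- Let a, b, c be positive integers with gcd(a,c) = gcd(b,c) = 1 and let t be an integer. Then σ_t(a,b;c) = −(1/(4c)) · Σ_{k=1}^{c−1} e^{(πik/c)(−2t+a+b)} / ( sin(πka/c) · sin(πkb/c) ). -/
/-!
Substitute `λ ↦ λ⁻¹` (that is, `k ↦ c - k`) and write `λ⁻¹ = e^{-2iθ}` with `θ = πk/c`.
Then `λ^{-n} - 1 = -2i e^{-inθ} sin(nθ)`, so the two denominators contribute
`(-2i)² = -4`, the sines, and a factor `e^{-i(a+b)θ}` which combines with `λ^{-t}`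
into `e^{iθ(-2t+a+b)}`.
-/

open Complex Real Finset

/-- The Fourier–Dedekind sum `σ_t(a,b;c) = (1/c) ∑_{λ^c = 1, λ ≠ 1}
λ^t / ((λ^a - 1)(λ^b - 1))`, where the nontrivial `c`-th roots of unity are
parametrized as `λ = e^{2πik/c}`, `1 ≤ k ≤ c-1`. -/
noncomputable def fourierDedekind (t : ℤ) (a b c : ℕ) : ℂ :=
  (1 / (c : ℂ)) * ∑ k ∈ Finset.Icc 1 (c - 1),
    Complex.exp (2 * Real.pi * Complex.I * k / c) ^ t /
      ((Complex.exp (2 * Real.pi * Complex.I * k / c) ^ (a : ℕ) - 1) *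
        (Complex.exp (2 * Real.pi * Complex.I * k / c) ^ (b : ℕ) - 1))

theorem Finset.sum_Icc_reflect {M : Type*} [AddCommMonoid M] (f : ℕ → M) (n : ℕ) :
    ∑ k ∈ Icc 1 (n - 1), f (n - k) = ∑ k ∈ Icc 1 (n - 1), f k :=
  sum_nbij' (n - ·) (n - ·) (fun k hk => by simp only [mem_Icc] at hk ⊢; omega)
    (fun k hk => by simp only [mem_Icc] at hk ⊢; omega)
    (fun k hk => by simp only [mem_Icc] at hk; omega)
    (fun k hk => by simp only [mem_Icc] at hk; omega) (fun _ _ => rfl)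

namespace Complex

theorem exp_two_mul_mul_I_sub_one (w : ℂ) :
    exp (2 * w * I) - 1 = 2 * I * exp (w * I) * sin w := by
  rw [sin, neg_mul, exp_neg, show 2 * w * I = w * I + w * I by ring, exp_add]
  have := exp_ne_zero (w * I)
  field_simp
  linear_combination (exp (w * I) ^ 2 - 1) * I_sq

theorem exp_neg_two_mul_mul_I_pow_sub_one (θ : ℂ) (n : ℕ) :
    exp (-2 * θ * I) ^ n - 1 = -2 * I * exp (-(θ * n) * I) * sin (θ * n) := by
  rw [← exp_nat_mul, show (n : ℂ) * (-2 * θ * I) = 2 * -(θ * n) * I by ring,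
    exp_two_mul_mul_I_sub_one, sin_neg]
  ring

theorem exp_neg_two_mul_mul_I_zpow_div_eq_sin_mul_sin (θ : ℂ) (t : ℤ) (a b : ℕ) :
    exp (-2 * θ * I) ^ t / ((exp (-2 * θ * I) ^ a - 1) * (exp (-2 * θ * I) ^ b - 1)) =
      -(1 / 4) * (exp (θ * I * (-2 * t + a + b)) / (sin (θ * a) * sin (θ * b))) := by
  rw [exp_neg_two_mul_mul_I_pow_sub_one, exp_neg_two_mul_mul_I_pow_sub_one, ← exp_int_mul]
  have hsplit : exp (θ * I * (-2 * t + a + b)) * (exp (-(θ * a) * I) * exp (-(θ * b) * I)) =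
      exp (t * (-2 * θ * I)) := by
    rw [← exp_add, ← exp_add]; ring_nf
  rw [← hsplit]
  have hexpa := exp_ne_zero (-(θ * a) * I)
  have hexpb := exp_ne_zero (-(θ * b) * I)
  -- If a sine vanishes, both sides are `0` because `x / 0 = 0`.
  rcases eq_or_ne (sin (θ * a) * sin (θ * b)) 0 with h | h
  · rcases mul_eq_zero.mp h with h | h <;> simp [h]
  · obtain ⟨hsa, hsb⟩ := mul_ne_zero_iff.mp h
    field_simp
    linear_combination 4 * I_sq

theorem exp_two_pi_mul_I_mul_sub_div {c k : ℕ} (hc : c ≠ 0) (hk : k ≤ c) :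
    exp (2 * π * I * (c - k : ℕ) / c) = exp (-2 * (π * k / c) * I) := by
  have : 2 * π * I * (c - k : ℕ) / c = -2 * (π * k / c) * I + 2 * π * I := by
    push_cast [Nat.cast_sub hk]; field_simp; ring
  rw [this, exp_add, exp_two_pi_mul_I, mul_one]

end Complex

theorem fourierDedekind_eq_dedekindRademacher_general (a b c : ℕ) (t : ℤ) :
    fourierDedekind t a b c =
      -(1 / (4 * (c : ℂ))) * ∑ k ∈ Finset.Icc 1 (c - 1),
        Complex.exp (Real.pi * Complex.I * k / c * (-2 * t + a + b)) /
          ((Real.sin (Real.pi * k * a / c) : ℂ) * (Real.sin (Real.pi * k * b / c) : ℂ)) := by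
  rw [fourierDedekind, ← sum_Icc_reflect, mul_sum, mul_sum]
  refine sum_congr rfl fun k hk => ?_
  have hkc : k ≤ c := by simp only [mem_Icc] at hk; omega
  have hc : c ≠ 0 := by simp only [mem_Icc] at hk; omega
  rw [exp_two_pi_mul_I_mul_sub_div hc hkc, exp_neg_two_mul_mul_I_zpow_div_eq_sin_mul_sin]
  push_cast
  ring_nf

/-- For positive integers `a, b, c` with `gcd(a,c) = gcd(b,c) = 1` and `t ∈ ℤ`:
`σ_t(a,b;c) = -(1/(4c)) ∑_{k=1}^{c-1} e^{(πik/c)(-2t+a+b)} / (sin(πka/c) sin(πkb/c))`. -/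
theorem fourierDedekind_eq_dedekindRademacher (a b c : ℕ)
    (ha : 0 < a) (hb : 0 < b) (hc : 0 < c)
    (hac : Nat.Coprime a c) (hbc : Nat.Coprime b c) (t : ℤ) :
    fourierDedekind t a b c =
      -(1 / (4 * (c : ℂ))) * ∑ k ∈ Finset.Icc 1 (c - 1),
        Complex.exp (Real.pi * Complex.I * k / c * (-2 * t + a + b)) /
          ((Real.sin (Real.pi * k * a / c) : ℂ) * (Real.sin (Real.pi * k * b / c) : ℂ)) :=
  fourierDedekind_eq_dedekindRademacher_general a b c t
end
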